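/- With the two-soliton collision setup, the inverse collision law holds: given u₁ and u_{{1},2} (with ‖u₁‖ = ‖u_{{1},2}‖ = 1), one recovers u₂ by u₂ = e^{-φ₁₂}·((ζ₁-ζ₂*)/(ζ₁*-ζ₂*))·(u_{{1},2} + ((ζ₁-ζ₁*)/(ζ₁*-ζ₂*))·⟨u_{{1},2},u₁⟩·u₁), where e^{-2φ₁₂} = |（ζ₁-ζ₂)/(ζ₁-ζ₂*)|²·(1 - ((ζ₁-ζ₁*)(ζ₂-ζ₂*)/|ζ₁-ζ₂|²)·|⟨u₁,u_{{1},2}⟩|²)^{-1}. That is, substituting the forward definition u_{{1},2} = e^{φ₁₂}((ζ₁*-ζ₂*)/(ζ₁-ζ₂*))(u₂ - ((ζ₁-ζ₁*)/(ζ₁-ζ₂*))⟨u₂,u₁⟩u₁) into the inverse formula returns u₂. -/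

import Mathlib

open Complex Matrix BigOperators

noncomputable section

/-!
Put `α = ζ₁ - ζ̄₁`, `β = ζ₁ - ζ̄₂`, `γ = ζ̄₁ - ζ̄₂`, so that `β - α = γ`. Because of this relation the
forward law gives `⟨u_{1,2}, u₁⟩ = e^{φ₁₂} (γ/β)² ⟨u₂, u₁⟩`, and then the inverse formula undoes the
forward one as soon as its scalar factor equals `e^{-φ₁₂}`. With `d = |ζ₁ - ζ₂|`, `b = |β|`,
`y = 4 Im ζ₁ Im ζ₂` and `r = |⟨u₁, u₂⟩|` one has `b² = d² + y`, and both factors reduce to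
`d² (b² - y r²) / b⁴`, which is positive because `r ≤ 1` by Cauchy–Schwarz.
-/

/-- Hermitian inner product on ℂ^m, linear in the first slot. -/
def herm {m : ℕ} (u v : Fin m → ℂ) : ℂ := ∑ a, u a * (starRingEnd ℂ) (v a)

lemma herm_eq_inner {m : ℕ} (u v : Fin m → ℂ) :
    herm u v = inner ℂ (WithLp.toLp 2 v) (WithLp.toLp 2 u) := by
  simp [herm, PiLp.inner_apply]

lemma herm_swap {m : ℕ} (u v : Fin m → ℂ) : herm v u = starRingEnd ℂ (herm u v) := by
  simp [herm, mul_comm]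

lemma norm_herm_le_one {m : ℕ} {u v : Fin m → ℂ} (hu : herm u u = 1) (hv : herm v v = 1) :
    ‖herm u v‖ ≤ 1 := by
  have h_unit : ∀ w : Fin m → ℂ, herm w w = 1 → ‖WithLp.toLp 2 w‖ = 1 := fun w hw => by
    have h := inner_self_eq_norm_sq (𝕜 := ℂ) (WithLp.toLp 2 w)
    rw [← herm_eq_inner, hw, RCLike.one_re] at h
    exact (pow_eq_one_iff_of_nonneg (norm_nonneg _) two_ne_zero).1 h.symm
  simpa [herm_eq_inner, h_unit u hu, h_unit v hv] using
    norm_inner_le_norm (𝕜 := ℂ) (WithLp.toLp 2 v) (WithLp.toLp 2 u)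

lemma herm_smul_sub_left {m : ℕ} (k l : ℂ) (u v w : Fin m → ℂ) :
    herm (fun a => k * (u a - l * v a)) w = k * (herm u w - l * herm v w) := by
  simp only [herm, Finset.mul_sum, ← Finset.sum_sub_distrib]
  exact Finset.sum_congr rfl fun a _ => by ring

lemma herm_collide_left {m : ℕ} {u : Fin m → ℂ} (hu : herm u u = 1) (v : Fin m → ℂ)
    (t : ℂ) {α β γ : ℂ} (hβ : β ≠ 0) (hαβγ : β - α = γ) :
    herm (fun a => t * (γ / β) * (v a - α / β * herm v u * u a)) u
      = t * (γ / β) ^ 2 * herm v u := by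
  subst hαβγ
  rw [herm_smul_sub_left, hu]
  field_simp

lemma eq_of_collide {m : ℕ} {u : Fin m → ℂ} (hu : herm u u = 1) (v w : Fin m → ℂ)
    {t α β γ : ℂ} (ht : t ≠ 0) (hβ : β ≠ 0) (hγ : γ ≠ 0) (hαβγ : β - α = γ)
    (hw : w = fun a => t * (γ / β) * (v a - α / β * herm v u * u a)) :
    v = fun a => t⁻¹ * (β / γ) * (w a + α / γ * herm w u * u a) := by
  rw [hw, herm_collide_left hu v t hβ hαβγ]
  subst hαβγ
  funext a
  field_simp
  ring

lemma collision_factor_eq {d b y r : ℝ} (hb : b ≠ 0) :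
    (d / b) ^ 2 * (1 + (-y) / b ^ 2 * r ^ 2) = d ^ 2 * (b ^ 2 - y * r ^ 2) / b ^ 4 := by
  field_simp
  ring

lemma collision_factor_pos {d b y r : ℝ} (hd : 0 < d) (hb : b ^ 2 = d ^ 2 + y)
    (hy : 0 ≤ y) (hr : r ^ 2 ≤ 1) :
    0 < (d / b) ^ 2 * (1 + (-y) / b ^ 2 * r ^ 2) := by
  have hb0 : b ≠ 0 := by rintro rfl; nlinarith
  have : 0 < b ^ 2 - y * r ^ 2 := by nlinarith
  rw [collision_factor_eq hb0]
  positivity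

lemma collision_factor_inverse_eq {d b y r : ℝ} (hd : 0 < d) (hb : b ^ 2 = d ^ 2 + y)
    (hy : 0 ≤ y) (hr : r ^ 2 ≤ 1) :
    (d / b) ^ 2 * (1 - (-y) / d ^ 2 *
        ((√((d / b) ^ 2 * (1 + (-y) / b ^ 2 * r ^ 2)))⁻¹ * (d ^ 2 / b ^ 2) * r) ^ 2)⁻¹
      = (d / b) ^ 2 * (1 + (-y) / b ^ 2 * r ^ 2) := by
  have hb0 : b ≠ 0 := by rintro rfl; nlinarith
  have hbr : 0 < b ^ 2 - y * r ^ 2 := by nlinarith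
  rw [mul_pow, mul_pow, inv_pow, Real.sq_sqrt (collision_factor_pos hd hb hy hr).le,
    collision_factor_eq hb0]
  field_simp
  ring

lemma re_sub_conj_mul_sub_conj (z w : ℂ) :
    ((z - starRingEnd ℂ z) * (w - starRingEnd ℂ w)).re = -(4 * z.im * w.im) := by
  simp only [mul_re, sub_re, sub_im, conj_re, conj_im]
  ring

lemma norm_sub_conj_sq (z w : ℂ) :
    ‖z - starRingEnd ℂ w‖ ^ 2 = ‖z - w‖ ^ 2 + 4 * z.im * w.im := by
  simp only [Complex.sq_norm, normSq_apply, sub_re, sub_im, conj_re, conj_im]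
  ring

lemma sub_conj_ne_zero_of_im_pos {z w : ℂ} (hz : 0 < z.im) (hw : 0 < w.im) :
    z - starRingEnd ℂ w ≠ 0 := fun h => by
  have := congrArg im h
  simp only [sub_im, conj_im, sub_neg_eq_add, zero_im] at this
  linarith

theorem stmt13 {m : ℕ} (ζ₁ ζ₂ : ℂ) (h1 : 0 < ζ₁.im) (h2 : 0 < ζ₂.im) (hne : ζ₁ ≠ ζ₂)
    (u₁ u₂ : Fin m → ℂ) (hu1 : herm u₁ u₁ = 1) (hu2 : herm u₂ u₂ = 1) :
    -- forward collision law
    let eneg : ℝ := (‖(ζ₁ - ζ₂) / (ζ₁ - (starRingEnd ℂ) ζ₂)‖)^2 *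
      (1 + ((ζ₁ - (starRingEnd ℂ) ζ₁) * (ζ₂ - (starRingEnd ℂ) ζ₂)).re /
        (‖ζ₁ - (starRingEnd ℂ) ζ₂‖)^2 * (‖herm u₁ u₂‖)^2)
    let u12 : Fin m → ℂ := fun a =>
      (((Real.sqrt eneg)⁻¹ : ℝ) : ℂ) *
        (((starRingEnd ℂ) ζ₁ - (starRingEnd ℂ) ζ₂) / (ζ₁ - (starRingEnd ℂ) ζ₂)) *
        (u₂ a - (ζ₁ - (starRingEnd ℂ) ζ₁) / (ζ₁ - (starRingEnd ℂ) ζ₂) *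
          herm u₂ u₁ * u₁ a)
    -- e^{-2φ₁₂} expressed via u₁ and u_{{1},2} (the inverse form)
    let enegInv : ℝ := (‖(ζ₁ - ζ₂) / (ζ₁ - (starRingEnd ℂ) ζ₂)‖)^2 *
      (1 - ((ζ₁ - (starRingEnd ℂ) ζ₁) * (ζ₂ - (starRingEnd ℂ) ζ₂)).re /
        (‖ζ₁ - ζ₂‖)^2 * (‖herm u₁ u12‖)^2)⁻¹
    -- inverse collision law recovers u₂
    u₂ = fun a =>
      ((Real.sqrt enegInv : ℝ) : ℂ) *
        ((ζ₁ - (starRingEnd ℂ) ζ₂) / ((starRingEnd ℂ) ζ₁ - (starRingEnd ℂ) ζ₂)) *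
        (u12 a + (ζ₁ - (starRingEnd ℂ) ζ₁) / ((starRingEnd ℂ) ζ₁ - (starRingEnd ℂ) ζ₂) *
          herm u12 u₁ * u₁ a) := by
  intro eneg u12 enegInv
  have hβ := sub_conj_ne_zero_of_im_pos h1 h2
  have hγ : starRingEnd ℂ ζ₁ - starRingEnd ℂ ζ₂ ≠ 0 := by
    rwa [← map_sub, map_ne_zero, sub_ne_zero]
  have hd : 0 < ‖ζ₁ - ζ₂‖ := norm_pos_iff.2 (sub_ne_zero.2 hne)
  have hr : ‖herm u₁ u₂‖ ^ 2 ≤ 1 := pow_le_one₀ (norm_nonneg _) (norm_herm_le_one hu1 hu2)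
  have hE : eneg = (‖ζ₁ - ζ₂‖ / ‖ζ₁ - starRingEnd ℂ ζ₂‖) ^ 2 *
      (1 + -(4 * ζ₁.im * ζ₂.im) / ‖ζ₁ - starRingEnd ℂ ζ₂‖ ^ 2 * ‖herm u₁ u₂‖ ^ 2) := by
    simp only [eneg, norm_div, re_sub_conj_mul_sub_conj]
  have hE_pos : 0 < eneg := by
    rw [hE]
    exact collision_factor_pos hd (norm_sub_conj_sq ζ₁ ζ₂) (by positivity) hr
  have h_norm12 : ‖herm u₁ u12‖ =
      (√eneg)⁻¹ * (‖ζ₁ - ζ₂‖ ^ 2 / ‖ζ₁ - starRingEnd ℂ ζ₂‖ ^ 2) * ‖herm u₁ u₂‖ := by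
    have hc : herm u12 u₁ = (((√eneg)⁻¹ : ℝ) : ℂ) *
        ((starRingEnd ℂ ζ₁ - starRingEnd ℂ ζ₂) / (ζ₁ - starRingEnd ℂ ζ₂)) ^ 2 * herm u₂ u₁ :=
      herm_collide_left hu1 u₂ _ hβ (by ring)
    rw [herm_swap, norm_conj, hc, herm_swap, norm_mul, norm_mul, norm_conj, norm_pow, norm_div,
      ← map_sub, norm_conj, norm_real, Real.norm_of_nonneg (by positivity)]
    ring
  have hEinv : enegInv = eneg := by
    simp only [enegInv, h_norm12, norm_div, re_sub_conj_mul_sub_conj]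
    rw [hE]
    exact collision_factor_inverse_eq hd (norm_sub_conj_sq ζ₁ ζ₂) (by positivity) hr
  simp only [hEinv]
  have ht : (((√eneg)⁻¹ : ℝ) : ℂ)⁻¹ = ((√eneg : ℝ) : ℂ) := by push_cast; exact inv_inv _
  rw [← ht]
  exact eq_of_collide hu1 u₂ u12 (by simpa using Real.sqrt_ne_zero'.2 hE_pos) hβ hγ (by ring) rfl

end
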